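/- arXiv:1507.03820 — 2 statements merged into one kernel-verified Lean document; each statement's English description precedes it below -/
import Mathlib

section
/- The function x ↦ sinh(|x|) satisfies, in the sense of distributions, ⟨sinh(|x|), (1-∂_x^2)ψ⟩ = -2ψ(0) for every smooth compactly supported test function ψ: ℝ → ℝ. -/
open Real

theorem sinh_abs_distributional (ψ : ℝ → ℝ) (hψ : ContDiff ℝ (⊤ : ℕ∞) ψ)
    (hsupp : HasCompactSupport ψ) :
    ∫ x : ℝ, Real.sinh |x| * (ψ x - deriv (deriv ψ) x) = -2 * ψ 0 := by
  have hψ' : ContDiff ℝ (⊤ : ℕ∞) ψ := hψ.of_le (by simp)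
  have hψ1 : ContDiff ℝ (⊤ : ℕ∞) (deriv ψ) := by
    have := ContDiff.iterate_deriv 1 hψ'
    simpa using this
  have hψ2 : ContDiff ℝ (⊤ : ℕ∞) (deriv (deriv ψ)) := by
    have := ContDiff.iterate_deriv 1 hψ1
    simpa using this
  have hd1 : ∀ x, HasDerivAt ψ (deriv ψ x) x := fun x =>
    (hψ.differentiable (by simp) x).hasDerivAt
  have hd2 : ∀ x, HasDerivAt (deriv ψ) (deriv (deriv ψ) x) x := fun x =>
    (hψ1.differentiable (by simp) x).hasDerivAt
  obtain ⟨R, hR0, hRsub⟩ := hsupp.isBounded.subset_ball_lt 0 0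
  set f : ℝ → ℝ := fun x => Real.sinh |x| * (ψ x - deriv (deriv ψ) x) with hf
  have hzero : ∀ x, x ∉ Metric.ball (0:ℝ) R → ψ x = 0 ∧ deriv ψ x = 0 ∧
      deriv (deriv ψ) x = 0 := by
    intro x hx
    have hx1 : x ∉ tsupport ψ := fun h => hx (hRsub h)
    have hts1 : tsupport (deriv ψ) ⊆ tsupport ψ :=
      closure_minimal (support_deriv_subset) isClosed_closure
    have hx2 : x ∉ tsupport (deriv ψ) := fun h => hx1 (hts1 h)
    have hts2 : tsupport (deriv (deriv ψ)) ⊆ tsupport (deriv ψ) :=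
      closure_minimal (support_deriv_subset) isClosed_closure
    exact ⟨image_eq_zero_of_notMem_tsupport hx1, image_eq_zero_of_notMem_tsupport hx2,
      image_eq_zero_of_notMem_tsupport (fun h => hx2 (hts2 h))⟩
  have hsupp_f : Function.support f ⊆ Set.Ioc (-R) R := by
    intro x hx
    by_contra hmem
    have : x ∉ Metric.ball (0:ℝ) R := by
      simp only [Metric.mem_ball, Real.dist_eq, sub_zero]
      simp only [Set.mem_Ioc, not_and_or, not_lt, not_le] at hmem
      intro habs
      rcases hmem with h | h
      · linarith [abs_lt.mp habs]
      · linarith [abs_lt.mp habs]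
    obtain ⟨h1, _, h3⟩ := hzero x this
    apply hx
    simp [hf, h1, h3]
  have hcont : Continuous f :=
    (Real.continuous_sinh.comp continuous_abs).mul
      ((hψ.continuous).sub (hψ2.continuous))
  have key := intervalIntegral.integral_eq_integral_of_support_subset (μ := MeasureTheory.volume) hsupp_f
  rw [← key]
  have hRe : ψ R = 0 ∧ deriv ψ R = 0 := by
    have := hzero R (by simp [Real.dist_eq, abs_of_pos hR0])
    exact ⟨this.1, this.2.1⟩
  have hRe' : ψ (-R) = 0 ∧ deriv ψ (-R) = 0 := by
    have := hzero (-R) (by simp [Real.dist_eq, abs_of_pos hR0])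
    exact ⟨this.1, this.2.1⟩
  have hint : ∀ a b : ℝ, IntervalIntegrable f MeasureTheory.volume a b :=
    fun a b => hcont.intervalIntegrable a b
  have hsplit : ∫ x in (-R)..R, f x =
      (∫ x in (-R)..(0:ℝ), f x) + ∫ x in (0:ℝ)..R, f x :=
    (intervalIntegral.integral_add_adjacent_intervals (hint _ _) (hint _ _)).symm
  -- right piece
  have hFderiv : ∀ x : ℝ, HasDerivAt
      (fun y => Real.cosh y * ψ y - Real.sinh y * deriv ψ y)
      (Real.sinh x * (ψ x - deriv (deriv ψ) x)) x := by
    intro x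
    have h1 := ((Real.hasDerivAt_cosh x).mul (hd1 x)).sub
      ((Real.hasDerivAt_sinh x).mul (hd2 x))
    refine h1.congr_deriv ?_
    ring
  have hright : ∫ x in (0:ℝ)..R, f x = -ψ 0 := by
    have heq : ∫ x in (0:ℝ)..R, f x =
        ∫ x in (0:ℝ)..R, Real.sinh x * (ψ x - deriv (deriv ψ) x) := by
      apply intervalIntegral.integral_congr
      intro x hx
      rw [Set.uIcc_of_le hR0.le] at hx
      simp [hf, abs_of_nonneg hx.1]
    rw [heq, intervalIntegral.integral_eq_sub_of_hasDerivAt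
      (fun x _ => hFderiv x)
      ((((Real.continuous_sinh.mul (hψ.continuous.sub hψ2.continuous)).comp
        continuous_id)).intervalIntegrable 0 R)]
    simp [hRe.1, hRe.2, Real.cosh_zero, Real.sinh_zero]
  have hleft : ∫ x in (-R)..(0:ℝ), f x = -ψ 0 := by
    have hGderiv : ∀ x : ℝ, HasDerivAt
        (fun y => -(Real.cosh y * ψ y) + Real.sinh y * deriv ψ y)
        (-Real.sinh x * (ψ x - deriv (deriv ψ) x)) x := by
      intro x
      have h1 := (((Real.hasDerivAt_cosh x).mul (hd1 x)).neg).add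
        ((Real.hasDerivAt_sinh x).mul (hd2 x))
      refine h1.congr_deriv ?_
      ring
    have heq : ∫ x in (-R)..(0:ℝ), f x =
        ∫ x in (-R)..(0:ℝ), -Real.sinh x * (ψ x - deriv (deriv ψ) x) := by
      apply intervalIntegral.integral_congr
      intro x hx
      rw [Set.uIcc_of_le (by linarith : -R ≤ (0:ℝ))] at hx
      simp [hf, abs_of_nonpos hx.2, Real.sinh_neg]
    rw [heq, intervalIntegral.integral_eq_sub_of_hasDerivAt
      (fun x _ => hGderiv x)
      (((Real.continuous_sinh.neg.mul (hψ.continuous.sub hψ2.continuous))).intervalIntegrable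
        (-R) 0)]
    simp [hRe'.1, hRe'.2, Real.cosh_zero, Real.sinh_zero]
  rw [hsplit, hleft, hright]
  ring
end

section
/- Let ρ be a Borel probability measure on continuous functions f: ℝ → ℂ that is invariant under integer translations, and suppose the law of f(0) under ρ is absolutely continuous with respect to Lebesgue measure. Then ρ-almost surely, f does not belong to L²(ℝ). -/
open MeasureTheory Filter

noncomputable instance : MeasurableSpace C(ℝ, ℂ) := borel _
instance : BorelSpace C(ℝ, ℂ) := ⟨rfl⟩

open Set Topology intervalIntegral
open scoped ENNReal

/-! If `f ∈ L²`, then `‖f‖_n → 0`, so `f` eventually lies in every sublevel set `{‖f‖_n ≤ ε}`.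
By invariance under integer translations these sets all have the measure of `{‖f‖_0 ≤ ε}`, so
Fatou's lemma for sets gives `ρ(L²) ≤ ρ{‖f‖_0 ≤ ε}` for every `ε > 0`, hence
`ρ(L²) ≤ ρ{‖f‖_0 = 0}`. A continuous `f` with `‖f‖_0 = 0` vanishes at `0`, and `{f(0) = 0}`
is null because the law of `f(0)` has no atoms. -/

section

variable {α : Type*} [MeasurableSpace α] {μ : Measure α}

theorem measure_liminf_atTop_le_liminf_measure (s : ℕ → Set α) :
    μ (liminf s atTop) ≤ liminf (fun n => μ (s n)) atTop := by
  rw [liminf_eq_iSup_iInf_of_nat, liminf_eq_iSup_iInf_of_nat]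
  have hmono : Monotone fun n => ⋂ i ≥ n, s i :=
    fun m n hmn => biInter_mono (fun i hi => le_trans hmn hi) fun _ _ => subset_rfl
  simp only [iSup_eq_iUnion, iInf_eq_iInter]
  rw [hmono.measure_iUnion]
  gcongr with n
  exact le_iInf₂ fun i hi => measure_mono (biInter_subset_of_mem hi)

theorem le_measure_setOf_le_of_forall_gt [IsFiniteMeasure μ] {g : α → ℝ} (hg : Measurable g)
    {c : ℝ≥0∞} {t : ℝ} (h : ∀ ε > t, c ≤ μ {x | g x ≤ ε}) : c ≤ μ {x | g x ≤ t} := by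
  have hlim := tendsto_measure_biInter_gt (μ := μ) (s := fun ε => {x | g x ≤ ε}) (a := t)
    (fun ε _ => (measurableSet_le hg measurable_const).nullMeasurableSet)
    (fun _ _ _ hij _ hx => le_trans hx hij) ⟨t + 1, by linarith, measure_ne_top μ _⟩
  have hinter : (⋂ ε > t, {x | g x ≤ ε}) = {x | g x ≤ t} := by
    ext x
    simp only [mem_iInter, mem_ofPred_eq]
    exact ⟨fun hx => le_of_forall_gt_imp_ge_of_dense hx, fun hx ε hε => hx.trans hε.le⟩
  rw [hinter] at hlim
  exact ge_of_tendsto hlim (eventually_nhdsWithin_of_forall h)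

end

theorem MeasureTheory.Integrable.tendsto_intervalIntegral_add_atTop {E : Type*}
    [NormedAddCommGroup E] [NormedSpace ℝ E] {g : ℝ → E} (hg : Integrable g) (c : ℝ) :
    Tendsto (fun r => ∫ x in r..r + c, g x) atTop (𝓝 0) := by
  have hlim (d : ℝ) : Tendsto (fun r => ∫ x in (0 : ℝ)..r + d, g x) atTop
      (𝓝 (∫ x in Ioi 0, g x)) :=
    intervalIntegral_tendsto_integral_Ioi 0 hg.integrableOn
      (tendsto_atTop_add_const_right _ d tendsto_id)
  simpa only [add_zero, sub_self, integral_interval_sub_left hg.intervalIntegrable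
    hg.intervalIntegrable] using (hlim c).sub (hlim 0)

noncomputable section UnitEnergy

variable {E : Type*} [NormedAddCommGroup E]

def shiftRight (a : ℝ) (f : C(ℝ, E)) : C(ℝ, E) :=
  f.comp ⟨fun x => x - a, continuous_sub_right a⟩

/-- The paper's `‖f‖_R²`. -/
def unitEnergy (R : ℝ) (f : C(ℝ, E)) : ℝ := ∫ x in R..R + 1, ‖f x‖ ^ 2

theorem unitEnergy_shiftRight (R a : ℝ) (f : C(ℝ, E)) :
    unitEnergy R (shiftRight a f) = unitEnergy (R - a) f := by
  rw [unitEnergy, unitEnergy, sub_add_eq_add_sub]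
  exact integral_comp_sub_right (fun x => ‖f x‖ ^ 2) a

theorem continuous_unitEnergy (R : ℝ) : Continuous (unitEnergy R : C(ℝ, E) → ℝ) :=
  continuous_parametric_intervalIntegral_of_continuous' (continuous_eval.norm.pow 2) _ _

theorem unitEnergy_pos {R : ℝ} {f : C(ℝ, E)} (hf : f R ≠ 0) : 0 < unitEnergy R f :=
  integral_pos (lt_add_one R) (f.continuous.norm.pow 2).continuousOn
    (fun _ _ => by positivity) ⟨R, left_mem_Icc.2 (lt_add_one R).le, by positivity⟩

theorem tendsto_unitEnergy_atTop {f : C(ℝ, E)} (hf : MemLp f 2) :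
    Tendsto (fun R => unitEnergy R f) atTop (𝓝 0) :=
  hf.norm.integrable_sq.tendsto_intervalIntegral_add_atTop 1

theorem measure_setOf_unitEnergy_sub_le [MeasurableSpace C(ℝ, E)] [BorelSpace C(ℝ, E)]
    {ρ : Measure C(ℝ, E)} {a : ℝ} (hρ : ρ.map (shiftRight a) = ρ) (R ε : ℝ) :
    ρ {f | unitEnergy (R - a) f ≤ ε} = ρ {f | unitEnergy R f ≤ ε} := by
  have hmeas : Measurable (shiftRight a : C(ℝ, E) → C(ℝ, E)) :=
    (ContinuousMap.continuous_precomp _).measurable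
  conv_rhs => rw [← hρ, Measure.map_apply hmeas
    (measurableSet_le (continuous_unitEnergy R).measurable measurable_const)]
  simp only [preimage_ofPred_eq, unitEnergy_shiftRight]

end UnitEnergy

theorem not_L2_of_translation_invariant_measure
    (ρ : Measure C(ℝ, ℂ)) [IsProbabilityMeasure ρ]
    -- invariance under integer translations
    (hinv : ∀ n : ℤ,
      Measure.map (fun f : C(ℝ, ℂ) =>
        f.comp ⟨fun x => x - (n : ℝ), continuous_sub_right (n : ℝ)⟩) ρ = ρ)
    -- the law of f(0) is absolutely continuous w.r.t. Lebesgue measure on ℂ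
    (hac : Measure.map (fun f : C(ℝ, ℂ) => f 0) ρ ≪ volume) :
    ρ {f : C(ℝ, ℂ) | MemLp (fun x => f x) 2 (volume : Measure ℝ)} = 0 := by
  set A := {f : C(ℝ, ℂ) | MemLp (fun x => f x) 2 (volume : Measure ℝ)}
  have hsublevel (ε : ℝ) (hε : 0 < ε) : ρ A ≤ ρ {f | unitEnergy 0 f ≤ ε} :=
    calc ρ A ≤ ρ (liminf (fun n : ℕ => {f | unitEnergy n f ≤ ε}) atTop) :=
          measure_mono fun f hf => mem_liminf_iff_eventually_mem.2 <|
            ((tendsto_unitEnergy_atTop hf).comp tendsto_natCast_atTop_atTop).eventually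
              (eventually_le_nhds hε)
      _ ≤ liminf (fun n : ℕ => ρ {f | unitEnergy n f ≤ ε}) atTop :=
          measure_liminf_atTop_le_liminf_measure _
      _ = ρ {f | unitEnergy 0 f ≤ ε} := by
          refine (liminf_congr (Eventually.of_forall fun n => ?_)).trans (liminf_const _)
          simpa using measure_setOf_unitEnergy_sub_le (a := ((-n : ℤ) : ℝ)) (hinv (-n)) 0 ε
  have hvanish : {f : C(ℝ, ℂ) | unitEnergy 0 f ≤ 0} ⊆ {f | f 0 = 0} := fun f hf => by
    by_contra h
    exact (unitEnergy_pos h).not_ge hf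
  have hnull : ρ {f | f 0 = 0} = 0 := by
    have := hac (measure_singleton (0 : ℂ))
    rwa [Measure.map_apply (continuous_eval_const 0).measurable (measurableSet_singleton 0)]
      at this
  refine le_zero_iff.1 ?_
  calc ρ A ≤ ρ {f | unitEnergy 0 f ≤ 0} :=
        le_measure_setOf_le_of_forall_gt (continuous_unitEnergy 0).measurable hsublevel
    _ ≤ ρ {f | f 0 = 0} := measure_mono hvanish
    _ = 0 := hnull
end
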